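/- Let A be a commutative ring, m₁, …, m_n pairwise distinct maximal ideals of A, and M an A-module supported on {m₁, …, m_n}. Then the canonical map M → ∏_{i=1}^n M_{m_i} given by the localization maps is an isomorphism. -/

import Mathlib

/-! The primes containing the annihilator of any `z : M` lie in the support of `M`, hence among the
`mᵢ`. Since these are finitely many maximal ideals, any two distinct primes `p ≠ q` are separated
by some `u ∉ p`, `v ∉ q` with `(u v)ᴺ • z = 0`, so each `M_{mᵢ}` is supported at `mᵢ` alone.
Bijectivity is then checked locally: `y` lies in a submodule `N` as soon as every maximal ideal `P`
avoids some `s` with `s • y ∈ N`. At `P = mᵢ` only the `i`-th factor of `∏ M_{mⱼ}` survives, and at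
any other maximal ideal everything dies. -/

section

variable {R N : Type*} [CommSemiring R] [AddCommMonoid N] [Module R N]

theorem Submodule.mem_of_forall_isMaximal_exists_smul_mem (N' : Submodule R N) (y : N)
    (h : ∀ P : Ideal R, P.IsMaximal → ∃ s ∉ P, s • y ∈ N') : y ∈ N' := by
  let J : Ideal R := N'.comap (LinearMap.toSpanSingleton R N y)
  suffices hJ : J = ⊤ by simpa [J] using (hJ ▸ Submodule.mem_top : (1 : R) ∈ J)
  by_contra hJ
  obtain ⟨P, hP, hJP⟩ := J.exists_le_maximal hJ
  obtain ⟨s, hsP, hs⟩ := h P hP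
  exact hsP (hJP hs)

theorem Pi.exists_mem_smul_eq_zero {ι : Type*} [Fintype ι] {N : ι → Type*}
    [∀ i, AddCommMonoid (N i)] [∀ i, Module R (N i)] (S : Submonoid R) (y : ∀ i, N i)
    (h : ∀ i, ∃ c ∈ S, c • y i = 0) : ∃ c ∈ S, c • y = 0 := by
  choose c hcS hc using h
  refine ⟨∏ i, c i, prod_mem fun i _ => hcS i, funext fun i => ?_⟩
  obtain ⟨d, hd⟩ := Finset.dvd_prod_of_mem c (Finset.mem_univ i)
  rw [Pi.smul_apply, hd, mul_comm, mul_smul, hc i, smul_zero, Pi.zero_apply]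

end

section SupportedOnMaximals

variable {A : Type*} [CommRing A] {ι : Type*} {m : ι → Ideal A}

theorem Ideal.IsPrime.exists_notMem_forall_mem_of_ne [Fintype ι] {p : Ideal A} (hp : p.IsPrime)
    (hmax : ∀ i, (m i).IsMaximal) : ∃ u ∉ p, ∀ i, m i ≠ p → u ∈ m i := by
  classical
  by_contra! h
  have hle : (Finset.univ.filter (m · ≠ p)).inf m ≤ p := fun u hu => by
    by_contra hup
    obtain ⟨i, hip, hui⟩ := h u hup
    exact hui (Finset.inf_le (f := m) (Finset.mem_filter.2 ⟨Finset.mem_univ i, hip⟩) hu)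
  obtain ⟨i, hi, hip⟩ := hp.inf_le'.1 hle
  exact (Finset.mem_filter.1 hi).2 ((hmax i).eq_of_le hp.ne_top hip)

theorem Ideal.exists_notMem_mul_mem_radical [Fintype ι] (hmax : ∀ i, (m i).IsMaximal)
    {I : Ideal A} (hI : ∀ P : Ideal A, P.IsPrime → I ≤ P → ∃ i, P = m i) {p q : Ideal A}
    (hp : p.IsPrime) (hq : q.IsPrime) (hpq : p ≠ q) : ∃ u ∉ p, ∃ v ∉ q, u * v ∈ I.radical := by
  obtain ⟨u, hup, hu⟩ := hp.exists_notMem_forall_mem_of_ne hmax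
  obtain ⟨v, hvq, hv⟩ := hq.exists_notMem_forall_mem_of_ne hmax
  refine ⟨u, hup, v, hvq, ?_⟩
  rw [Ideal.radical_eq_sInf, Submodule.mem_sInf]
  rintro J ⟨hIJ, hJ⟩
  obtain ⟨i, rfl⟩ := hI J hJ hIJ
  by_cases hip : m i = p
  · exact Ideal.mul_mem_left _ u (hv i (hip ▸ hpq))
  · exact Ideal.mul_mem_right v _ (hu i hip)

variable {M : Type*} [AddCommGroup M] [Module A M]

theorem Module.support_localizedModule_subset_singleton [Fintype ι]
    (hmax : ∀ i, (m i).IsMaximal)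
    (hsupp : Module.support A M ⊆ {p | ∃ i, p.asIdeal = m i}) (q : Ideal A) [q.IsPrime] :
    Module.support A (LocalizedModule q.primeCompl M) ⊆ {p | p.asIdeal = q} := by
  intro p hp
  by_contra hpq
  refine Module.notMem_support_iff'.2 (fun w => ?_) hp
  obtain ⟨⟨z, t⟩, hzt⟩ :=
    IsLocalizedModule.surj q.primeCompl (LocalizedModule.mkLinearMap q.primeCompl M) w
  have hz : ∀ P : Ideal A, P.IsPrime → (A ∙ z).annihilator ≤ P → ∃ i, P = m i :=
    fun P hP hle => hsupp ((Module.mem_support_iff_exists_annihilator (p := ⟨P, hP⟩)).2 ⟨z, hle⟩)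
  obtain ⟨u, hup, v, hvq, huv⟩ :=
    Ideal.exists_notMem_mul_mem_radical hmax hz p.isPrime ‹_› hpq
  obtain ⟨k, hk⟩ := Ideal.mem_radical_iff.1 huv
  refine ⟨u ^ k, fun h => hup (p.isPrime.mem_of_pow_mem k h), ?_⟩
  refine LocalizedModule.eq_zero_of_smul_eq_zero (v ^ k * t) ?_ _ ?_
  · exact mul_mem (fun h => hvq (‹q.IsPrime›.mem_of_pow_mem k h)) t.2
  · have hzero : (u * v) ^ k • z = 0 := (Submodule.mem_annihilator_span_singleton z _).1 hk
    calc (v ^ k * t) • u ^ k • w = (u * v) ^ k • ((t : A) • w) := by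
          rw [smul_smul, smul_smul, mul_pow]
          congr 1
          ring
      _ = 0 := by rw [← Submonoid.smul_def, hzt, ← map_smul, hzero, map_zero]

theorem LocalizedModule.exists_notMem_smul_eq_zero_of_ne [Fintype ι]
    (hmax : ∀ i, (m i).IsMaximal)
    (hsupp : Module.support A M ⊆ {p | ∃ i, p.asIdeal = m i}) {p q : Ideal A} [p.IsPrime]
    [q.IsPrime] (hpq : p ≠ q) (w : LocalizedModule q.primeCompl M) : ∃ c ∉ p, c • w = 0 :=
  (Module.notMem_support_iff' (p := ⟨p, ‹_›⟩)).1
    (fun h => hpq (Module.support_localizedModule_subset_singleton hmax hsupp q h)) w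

theorem injective_pi_localizedModule_mkLinearMap [∀ i, (m i).IsPrime]
    (hsupp : Module.support A M ⊆ {p | ∃ i, p.asIdeal = m i}) :
    Function.Injective (LinearMap.pi fun i => LocalizedModule.mkLinearMap (m i).primeCompl M) := by
  refine (injective_iff_map_eq_zero _).2 fun x hx => ?_
  refine (Submodule.mem_bot A).1
    (Submodule.mem_of_forall_isMaximal_exists_smul_mem _ x fun P hP => ?_)
  by_cases hPm : ∃ i, P = m i
  · obtain ⟨i, rfl⟩ := hPm
    obtain ⟨s, hs⟩ :=
      (IsLocalizedModule.eq_zero_iff (m i).primeCompl (LocalizedModule.mkLinearMap _ M)).1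
        (congrFun hx i)
    exact ⟨s, s.2, hs⟩
  · exact (Module.notMem_support_iff' (p := ⟨P, hP.isPrime⟩)).1 (fun h => hPm (hsupp h)) x

theorem single_mem_range_pi_localizedModule_mkLinearMap [Fintype ι]
    (hmax : ∀ i, (m i).IsMaximal)
    (hdist : Function.Injective m) (hsupp : Module.support A M ⊆ {p | ∃ i, p.asIdeal = m i})
    [DecidableEq ι] (i : ι) (w : LocalizedModule (m i).primeCompl M) :
    Pi.single i w ∈
      LinearMap.range (LinearMap.pi fun i => LocalizedModule.mkLinearMap (m i).primeCompl M) := by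
  set f := LinearMap.pi fun i => LocalizedModule.mkLinearMap (m i).primeCompl M
  refine Submodule.mem_of_forall_isMaximal_exists_smul_mem _ _ fun P hP => ?_
  by_cases hPi : P = m i
  · subst hPi
    obtain ⟨⟨z, t⟩, hzt⟩ :=
      IsLocalizedModule.surj (m i).primeCompl (LocalizedModule.mkLinearMap _ M) w
    -- `z` dies in every `M_{m k}` with `k ≠ i` after multiplying by some `c ∉ m i`.
    obtain ⟨c, hc, hcz⟩ :=
      Pi.exists_mem_smul_eq_zero (m i).primeCompl (f z - Pi.single i (f z i)) fun k => by
        by_cases hki : k = i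
        · subst hki
          exact ⟨1, one_mem _, by simp⟩
        · obtain ⟨c, hc, hcz⟩ := LocalizedModule.exists_notMem_smul_eq_zero_of_ne hmax hsupp
            (fun h => hki (hdist h.symm)) (f z k)
          exact ⟨c, hc, by rwa [Pi.sub_apply, Pi.single_eq_of_ne hki, sub_zero]⟩
    have hfz : c • f z = c • Pi.single i (f z i) := by rwa [smul_sub, sub_eq_zero] at hcz
    refine ⟨c * t, mul_mem hc t.2, c • z, ?_⟩
    have htw : (t : A) • w = f z i := hzt
    rw [map_smul, hfz, mul_smul, ← htw, Pi.single_smul]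
  · obtain ⟨c, hc, hcw⟩ :=
      LocalizedModule.exists_notMem_smul_eq_zero_of_ne hmax hsupp (p := P) hPi w
    exact ⟨c, hc, by rw [← Pi.single_smul, hcw, Pi.single_zero]; exact zero_mem _⟩

theorem surjective_pi_localizedModule_mkLinearMap [Fintype ι] (hmax : ∀ i, (m i).IsMaximal)
    (hdist : Function.Injective m) (hsupp : Module.support A M ⊆ {p | ∃ i, p.asIdeal = m i}) :
    Function.Surjective (LinearMap.pi fun i => LocalizedModule.mkLinearMap (m i).primeCompl M) := by
  classical
  rw [← LinearMap.range_eq_top, eq_top_iff]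
  rintro y -
  rw [← Finset.univ_sum_single y]
  exact sum_mem fun i _ =>
    single_mem_range_pi_localizedModule_mkLinearMap hmax hdist hsupp i (y i)

end SupportedOnMaximals

/-- If `M` is a module over a commutative ring `A` supported on finitely many pairwise
distinct maximal ideals `m 1, …, m n`, then the canonical map `M → ∏ᵢ M_{mᵢ}` given by
the localization maps is an isomorphism. -/
theorem module_supported_on_maximals_eq_product_of_localizations
    (A : Type*) [CommRing A] (M : Type*) [AddCommGroup M] [Module A M]
    (n : ℕ) (m : Fin n → Ideal A) (hmax : ∀ i, (m i).IsMaximal)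
    (hdist : Function.Injective m)
    (hsupp : ∀ (p : Ideal A) (_ : p.IsPrime) (_ : ∀ i, p ≠ m i),
      Subsingleton (LocalizedModule p.primeCompl M)) :
    Function.Bijective
      (fun x : M => fun i => LocalizedModule.mkLinearMap (m i).primeCompl M x) := by
  have hsupp' : Module.support A M ⊆ {p | ∃ i, p.asIdeal = m i} := fun p hp => by
    by_contra h
    exact Module.notMem_support_iff.2 (hsupp p.asIdeal p.isPrime fun i hi => h ⟨i, hi⟩) hp
  exact ⟨injective_pi_localizedModule_mkLinearMap hsupp',
    surjective_pi_localizedModule_mkLinearMap hmax hdist hsupp'⟩
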